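/- arXiv:0801.1744 — 2 statements merged into one kernel-verified Lean document; each statement's English description precedes it below -/
import Mathlib

section
/- Let G be a simple graph, let xy be an edge of G, let G' = G − xy, and let c be an acyclic proper edge coloring of G'. Let F_x and F_y be the sets of colors appearing on edges of G' incident to x and to y respectively, and let β be a color with β ∉ F_x ∪ F_y. Then extending c to G by assigning color β to the edge xy fails to be an acyclic proper edge coloring of G if and only if there exists a color α ∈ F_x ∩ F_y such that G' contains an (α,β,xy)-critical path, i.e., a maximal path whose edges are colored alternately α and β, with endpoints x and y, whose edge incident to x and whose edge incident to y are both colored α. -/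
/-- A proper edge coloring: distinct edges of `G` sharing a vertex get distinct colors. -/
def ProperEdgeColoring {V : Type*} (G : SimpleGraph V) (c : Sym2 V → ℕ) : Prop :=
  ∀ e₁ ∈ G.edgeSet, ∀ e₂ ∈ G.edgeSet, e₁ ≠ e₂ → (∃ v : V, v ∈ e₁ ∧ v ∈ e₂) → c e₁ ≠ c e₂

/-- An acyclic proper edge coloring: proper, and no cycle of `G` uses only two colors. -/
def AcyclicProperEdgeColoring {V : Type*} (G : SimpleGraph V) (c : Sym2 V → ℕ) : Prop :=
  ProperEdgeColoring G c ∧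
    ∀ (v : V) (p : G.Walk v v), p.IsCycle →
      ¬ ∃ α β : ℕ, ∀ e ∈ p.edges, c e = α ∨ c e = β

/-- The set of colors appearing on edges of `G` incident to `u`. -/
def incidentColors {V : Type*} (G : SimpleGraph V) (c : Sym2 V → ℕ) (u : V) : Set ℕ :=
  {γ : ℕ | ∃ v : V, G.Adj u v ∧ c s(u, v) = γ}

/-- An (α,β)-bichromatic path: a path all of whose edges are colored α or β. -/
def IsBichromaticPath {V : Type*} (G : SimpleGraph V) (c : Sym2 V → ℕ) (α β : ℕ)
    {a b : V} (p : G.Walk a b) : Prop :=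
  p.IsPath ∧ ∀ e ∈ p.edges, c e = α ∨ c e = β

/-- A maximal (α,β)-bichromatic path: it cannot be extended at either endpoint. -/
def IsMaximalBichromaticPath {V : Type*} (G : SimpleGraph V) (c : Sym2 V → ℕ) (α β : ℕ)
    {a b : V} (p : G.Walk a b) : Prop :=
  IsBichromaticPath G c α β p ∧
    (∀ w : V, G.Adj a w → (c s(a, w) = α ∨ c s(a, w) = β) → s(a, w) ∈ p.edges) ∧
    (∀ w : V, G.Adj b w → (c s(b, w) = α ∨ c s(b, w) = β) → s(b, w) ∈ p.edges)

/-- An (α,β,ab)-critical path: a maximal (α,β)-bichromatic path from `a` to `b`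
whose edges incident to the endpoints are colored α. -/
def IsCriticalPath {V : Type*} (G : SimpleGraph V) (c : Sym2 V → ℕ) (α β : ℕ)
    {a b : V} (p : G.Walk a b) : Prop :=
  IsMaximalBichromaticPath G c α β p ∧
    (∀ e ∈ p.edges, a ∈ e → c e = α) ∧ (∀ e ∈ p.edges, b ∈ e → c e = α)

/-! A two-colored cycle created by coloring `xy` with `β` must pass through `xy`, because `c` is
acyclic on `G - xy`; so `β` is one of its colors, say with `α`, and removing `xy` leaves an
`(α,β)`-path from `x` to `y` in `G - xy`. As `β` is missing at `x` and `y`, the end edges of this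
path are colored `α`, and properness makes it maximal. Conversely, any `(α,β)`-path from `x` to `y`
closes up with `xy` into a two-colored cycle. -/

open SimpleGraph

section

variable {V : Type*} {G : SimpleGraph V} {c : Sym2 V → ℕ} {α β : ℕ}

lemma color_mem_incidentColors {u : V} {e : Sym2 V} (he : e ∈ G.edgeSet) (hu : u ∈ e) :
    c e ∈ incidentColors G c u := by
  obtain ⟨w, rfl⟩ := Sym2.mem_iff_exists.mp hu
  exact ⟨w, he, rfl⟩

lemma ProperEdgeColoring.eq_of_color_eq (hc : ProperEdgeColoring G c) {u : V} {e₁ e₂ : Sym2 V}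
    (h₁ : e₁ ∈ G.edgeSet) (h₂ : e₂ ∈ G.edgeSet) (hu₁ : u ∈ e₁) (hu₂ : u ∈ e₂)
    (h : c e₁ = c e₂) : e₁ = e₂ := by
  by_contra hne
  exact hc e₁ h₁ e₂ h₂ hne ⟨u, hu₁, hu₂⟩ h

lemma mem_edgeSet_deleteEdges_edge {x y : V} {e : Sym2 V} :
    e ∈ (G.deleteEdges {s(x, y)}).edgeSet ↔ e ∈ G.edgeSet ∧ e ≠ s(x, y) := by
  simp [edgeSet_deleteEdges]

section CriticalPath

variable {x y : V} {p : G.Walk x y}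

/-- At an endpoint missing `β`, every `α`/`β` edge is colored `α`, so by properness it is the
path's own end edge. -/
theorem IsBichromaticPath.isCriticalPath (hxy : x ≠ y) (hc : ProperEdgeColoring G c)
    (hβx : β ∉ incidentColors G c x) (hβy : β ∉ incidentColors G c y)
    (hp : IsBichromaticPath G c α β p) : IsCriticalPath G c α β p := by
  have color_eq_α {u : V} {e : Sym2 V} (hβu : β ∉ incidentColors G c u) (he : e ∈ G.edgeSet)
      (hu : u ∈ e) (hcol : c e = α ∨ c e = β) : c e = α :=
    hcol.resolve_right fun h => hβu (h ▸ color_mem_incidentColors he hu)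
  have hnil : ¬ p.Nil := Walk.not_nil_of_ne hxy
  have hx := p.mk_start_snd_mem_edges hnil
  have hy := p.mk_penultimate_end_mem_edges hnil
  have hxG := p.edges_subset_edgeSet hx
  have hyG := p.edges_subset_edgeSet hy
  have hxα := color_eq_α hβx hxG (Sym2.mem_mk_left _ _) (hp.2 _ hx)
  have hyα := color_eq_α hβy hyG (Sym2.mem_mk_right _ _) (hp.2 _ hy)
  refine ⟨⟨hp, fun w hw hcol => ?_, fun w hw hcol => ?_⟩,
    fun e he hxe => color_eq_α hβx (p.edges_subset_edgeSet he) hxe (hp.2 e he),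
    fun e he hye => color_eq_α hβy (p.edges_subset_edgeSet he) hye (hp.2 e he)⟩
  · rwa [hc.eq_of_color_eq hw hxG (Sym2.mem_mk_left _ _) (Sym2.mem_mk_left _ _)
      ((color_eq_α hβx hw (Sym2.mem_mk_left _ _) hcol).trans hxα.symm)]
  · rwa [hc.eq_of_color_eq hw hyG (Sym2.mem_mk_left _ _) (Sym2.mem_mk_right _ _)
      ((color_eq_α hβy hw (Sym2.mem_mk_left _ _) hcol).trans hyα.symm)]

theorem IsCriticalPath.mem_incidentColors (hxy : x ≠ y) (hp : IsCriticalPath G c α β p) :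
    α ∈ incidentColors G c x ∧ α ∈ incidentColors G c y := by
  have hnil : ¬ p.Nil := Walk.not_nil_of_ne hxy
  have hx := p.mk_start_snd_mem_edges hnil
  have hy := p.mk_penultimate_end_mem_edges hnil
  exact ⟨hp.2.1 _ hx (Sym2.mem_mk_left _ _) ▸
      color_mem_incidentColors (p.edges_subset_edgeSet hx) (Sym2.mem_mk_left _ _),
    hp.2.2 _ hy (Sym2.mem_mk_right _ _) ▸
      color_mem_incidentColors (p.edges_subset_edgeSet hy) (Sym2.mem_mk_right _ _)⟩

end CriticalPath

/-- Inside the subgraph of edges satisfying `P`, an edge on a cycle is not a bridge. -/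
theorem SimpleGraph.Walk.IsCycle.exists_isPath_deleteEdges {P : Sym2 V → Prop} {u x y : V}
    {r : G.Walk u u} (hr : r.IsCycle) (hxy : s(x, y) ∈ r.edges) (hP : ∀ e ∈ r.edges, P e) :
    ∃ q : (G.deleteEdges {s(x, y)}).Walk x y, q.IsPath ∧ ∀ e ∈ q.edges, P e := by
  classical
  set H := G.deleteEdges {e | ¬ P e}
  have hrH : ∀ e ∈ r.edges, e ∈ H.edgeSet := fun e he => by
    simp [H, edgeSet_deleteEdges, r.edges_subset_edgeSet he, hP e he]
  obtain ⟨-, ⟨q⟩⟩ := H.adj_and_reachable_delete_edges_iff_exists_cycle.mpr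
    ⟨u, r.transfer H hrH, hr.transfer hrH, by rwa [r.edges_transfer]⟩
  have hle : H.deleteEdges {s(x, y)} ≤ G.deleteEdges {s(x, y)} :=
    deleteEdges_mono (G.deleteEdges_le _)
  refine ⟨q.toPath.1.mapLe hle, q.toPath.2.mapLe hle, fun e he => ?_⟩
  rw [Walk.edges_mapLe_eq_edges] at he
  have := q.toPath.1.edges_subset_edgeSet he
  simp only [H, edgeSet_deleteEdges, Set.mem_sdiff, Set.mem_ofPred_eq] at this
  tauto

theorem SimpleGraph.Walk.IsPath.isCycle_cons_mapLe_deleteEdges {x y : V} (hxy : G.Adj x y)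
    {q : (G.deleteEdges {s(x, y)}).Walk x y} (hq : q.IsPath) :
    (Walk.cons hxy.symm (q.mapLe (G.deleteEdges_le _))).IsCycle := by
  refine (Walk.cons_isCycle_iff _ _).mpr ⟨hq.mapLe _, fun h => ?_⟩
  rw [Walk.edges_mapLe_eq_edges] at h
  simpa [Sym2.eq_swap] using mem_edgeSet_deleteEdges_edge.mp (q.edges_subset_edgeSet h)

section Extension

variable [DecidableEq V] {x y : V}

theorem ProperEdgeColoring.extend (hc : ProperEdgeColoring (G.deleteEdges {s(x, y)}) c)
    (hβx : β ∉ incidentColors (G.deleteEdges {s(x, y)}) c x)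
    (hβy : β ∉ incidentColors (G.deleteEdges {s(x, y)}) c y) :
    ProperEdgeColoring G (fun e => if e = s(x, y) then β else c e) := by
  rintro e₁ h₁ e₂ h₂ hne ⟨v, hv₁, hv₂⟩
  beta_reduce
  have color_ne_β {e : Sym2 V} (he : e ∈ G.edgeSet) (hexy : e ≠ s(x, y)) (hv : v ∈ s(x, y))
      (hve : v ∈ e) : c e ≠ β := by
    intro hce
    have he' := mem_edgeSet_deleteEdges_edge.mpr ⟨he, hexy⟩
    rcases Sym2.mem_iff.mp hv with rfl | rfl
    · exact hβx (hce ▸ color_mem_incidentColors he' hve)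
    · exact hβy (hce ▸ color_mem_incidentColors he' hve)
  by_cases H₁ : e₁ = s(x, y) <;> by_cases H₂ : e₂ = s(x, y)
  · exact absurd (H₁.trans H₂.symm) hne
  · rw [if_pos H₁, if_neg H₂]
    exact (color_ne_β h₂ H₂ (H₁ ▸ hv₁) hv₂).symm
  · rw [if_neg H₁, if_pos H₂]
    exact color_ne_β h₁ H₁ (H₂ ▸ hv₂) hv₁
  · rw [if_neg H₁, if_neg H₂]
    exact hc e₁ (mem_edgeSet_deleteEdges_edge.mpr ⟨h₁, H₁⟩) e₂
      (mem_edgeSet_deleteEdges_edge.mpr ⟨h₂, H₂⟩) hne ⟨v, hv₁, hv₂⟩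

theorem exists_isBichromaticPath_of_not_acyclic_extend
    (hc : AcyclicProperEdgeColoring (G.deleteEdges {s(x, y)}) c)
    (hβx : β ∉ incidentColors (G.deleteEdges {s(x, y)}) c x)
    (hβy : β ∉ incidentColors (G.deleteEdges {s(x, y)}) c y)
    (hnot : ¬ AcyclicProperEdgeColoring G (fun e => if e = s(x, y) then β else c e)) :
    ∃ α, ∃ q : (G.deleteEdges {s(x, y)}).Walk x y,
      IsBichromaticPath (G.deleteEdges {s(x, y)}) c α β q := by
  simp only [AcyclicProperEdgeColoring, hc.1.extend hβx hβy, true_and, not_forall,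
    not_not] at hnot
  obtain ⟨u, r, hr, α', β', hcol⟩ := hnot
  have hxy : s(x, y) ∈ r.edges := by
    by_contra hxy
    have hr' : ∀ e ∈ r.edges, e ∈ (G.deleteEdges {s(x, y)}).edgeSet := fun e he =>
      mem_edgeSet_deleteEdges_edge.mpr ⟨r.edges_subset_edgeSet he, fun h => hxy (h ▸ he)⟩
    refine hc.2 u (r.transfer _ hr') (hr.transfer hr') ⟨α', β', fun e he => ?_⟩
    rw [r.edges_transfer] at he
    simpa only [if_neg (mem_edgeSet_deleteEdges_edge.mp (hr' e he)).2] using hcol e he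
  obtain ⟨α, hα⟩ : ∃ α, ∀ e ∈ r.edges, (if e = s(x, y) then β else c e) = α ∨
      (if e = s(x, y) then β else c e) = β := by
    rcases hcol _ hxy with h | h <;> rw [if_pos rfl] at h <;> subst h
    exacts [⟨β', fun e he => (hcol e he).symm⟩, ⟨α', hcol⟩]
  obtain ⟨q, hq, hqcol⟩ := hr.exists_isPath_deleteEdges hxy hα
  refine ⟨α, q, hq, fun e he => ?_⟩
  simpa only [if_neg (mem_edgeSet_deleteEdges_edge.mp (q.edges_subset_edgeSet he)).2]
    using hqcol e he

theorem not_acyclic_extend_of_isBichromaticPath (hxy : G.Adj x y)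
    {q : (G.deleteEdges {s(x, y)}).Walk x y}
    (hq : IsBichromaticPath (G.deleteEdges {s(x, y)}) c α β q) :
    ¬ AcyclicProperEdgeColoring G (fun e => if e = s(x, y) then β else c e) := by
  refine fun hAc => hAc.2 y _ (hq.1.isCycle_cons_mapLe_deleteEdges hxy) ⟨α, β, fun e he => ?_⟩
  rw [Walk.edges_cons, Walk.edges_mapLe_eq_edges, List.mem_cons] at he
  rcases he with rfl | he
  · simp [Sym2.eq_swap]
  · simpa only [if_neg (mem_edgeSet_deleteEdges_edge.mp (q.edges_subset_edgeSet he)).2]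
      using hq.2 e he

end Extension

end

/-- **Fact 2.** Let `xy` be an edge of `G`, `G' = G - xy`, and `c` an acyclic proper
edge coloring of `G'`.  A candidate color `β ∉ F_x ∪ F_y` fails to extend `c` to an
acyclic proper edge coloring of `G` if and only if there is a color `α ∈ F_x ∩ F_y`
such that `G'` contains an `(α,β,xy)`-critical path. -/
theorem candidate_not_valid_iff_critical_path {V : Type*} [DecidableEq V]
    (G : SimpleGraph V) (x y : V) (hxy : G.Adj x y) (c : Sym2 V → ℕ)
    (hc : AcyclicProperEdgeColoring (G.deleteEdges {s(x, y)}) c)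
    (β : ℕ)
    (hβ : β ∉ incidentColors (G.deleteEdges {s(x, y)}) c x ∪
            incidentColors (G.deleteEdges {s(x, y)}) c y) :
    ¬ AcyclicProperEdgeColoring G (fun e => if e = s(x, y) then β else c e) ↔
      ∃ α : ℕ, α ∈ incidentColors (G.deleteEdges {s(x, y)}) c x ∧
        α ∈ incidentColors (G.deleteEdges {s(x, y)}) c y ∧
        ∃ p : (G.deleteEdges {s(x, y)}).Walk x y,
          IsCriticalPath (G.deleteEdges {s(x, y)}) c α β p := by
  obtain ⟨hβx, hβy⟩ := not_or.mp hβ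
  constructor
  · intro hnot
    obtain ⟨α, q, hq⟩ := exists_isBichromaticPath_of_not_acyclic_extend hc hβx hβy hnot
    have hcrit := hq.isCriticalPath hxy.ne hc.1 hβx hβy
    obtain ⟨hαx, hαy⟩ := hcrit.mem_incidentColors hxy.ne
    exact ⟨α, hαx, hαy, q, hcrit⟩
  · rintro ⟨α, -, -, p, hp⟩
    exact not_acyclic_extend_of_isBichromaticPath hxy hp.1.1
end

section
/- Let G' be a simple graph with an acyclic proper edge coloring c, let u be a vertex, let i, j be neighbors of u, and let N' ∪ N'' be a partition of N(u) \ {i, j}. Suppose (1) c(u,i) does not appear on any edge incident to j other than uj, and c(u,j) does not appear on any edge incident to i other than ui; and (2) for every z ∈ N', the color c(u,z) appears neither on any edge incident to i other than ui nor on any edge incident to j other than uj. Let c' be obtained from c by exchanging the colors of edges ui and uj. Then c' is a proper edge coloring, and c' fails to be acyclic if and only if there exists h ∈ N'' such that, with respect to c', there is an (α,β)-bichromatic cycle passing through h with α ∈ {c'(u,i), c'(u,j)} and β = c'(u,h). -/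
open Equiv

lemma SimpleGraph.Walk.IsCycle.exists_ne_mem_edges {V : Type*} {G : SimpleGraph V}
    {v a b : V} {p : G.Walk v v} (hp : p.IsCycle) (hab : s(a, b) ∈ p.edges) :
    ∃ w, w ≠ b ∧ s(a, w) ∈ p.edges := by
  have hdeg := hp.ncard_neighborSet_toSubgraph_eq_two (p.fst_mem_support_of_mem_edges hab)
  obtain ⟨w, hw, hwb⟩ := Set.exists_ne_of_one_lt_ncard
    (s := p.toSubgraph.neighborSet a) (by omega) b
  exact ⟨w, hwb, p.mem_edges_toSubgraph.mp hw⟩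

lemma List.forall_mem_of_forall_mem_swap {α : Type*} [DecidableEq α] {l : List α} {a b : α}
    (hab : a ∈ l ↔ b ∈ l) {P : α → Prop} (h : ∀ x ∈ l, P (Equiv.swap a b x)) : ∀ x ∈ l, P x := by
  intro x hx
  have hmem : Equiv.swap a b x ∈ l := by
    rw [swap_apply_def]
    split_ifs with hxa hxb
    · exact hab.mp (hxa ▸ hx)
    · exact hab.mpr (hxb ▸ hx)
    · exact hx
  simpa using h _ hmem

section ColorExchange

variable {V : Type*} {G : SimpleGraph V} {c : Sym2 V → ℕ} {u i j : V}

lemma ProperEdgeColoring.comp_swap_ne_of_meets [DecidableEq V] (hc : ProperEdgeColoring G c)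
    (hui : G.Adj u i) (huj : G.Adj u j)
    (h1j : ∀ w, G.Adj i w → w ≠ u → c s(i, w) ≠ c s(u, j))
    {e : Sym2 V} (he : e ∈ G.edgeSet) (hne : e ≠ s(u, i)) (hmeet : ∃ v, v ∈ e ∧ v ∈ s(u, i)) :
    c (swap s(u, i) s(u, j) e) ≠ c s(u, j) := by
  by_cases hej : e = s(u, j)
  · subst hej
    rw [swap_apply_right]
    exact hc _ hui _ huj hne.symm ⟨u, by simp, by simp⟩
  rw [swap_apply_of_ne_of_ne hne hej]
  obtain ⟨v, hve, hv⟩ := hmeet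
  rcases Sym2.mem_iff.mp hv with rfl | rfl
  · exact hc e he _ huj hej ⟨v, hve, by simp⟩
  · obtain ⟨w, rfl⟩ := Sym2.mem_iff_exists.mp hve
    refine h1j w he fun hwu => hne ?_
    rw [hwu, Sym2.eq_swap]

lemma ProperEdgeColoring.comp_swap [DecidableEq V] (hc : ProperEdgeColoring G c)
    (hui : G.Adj u i) (huj : G.Adj u j)
    (h1i : ∀ w, G.Adj j w → w ≠ u → c s(j, w) ≠ c s(u, i))
    (h1j : ∀ w, G.Adj i w → w ≠ u → c s(i, w) ≠ c s(u, j)) :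
    ProperEdgeColoring G (c ∘ swap s(u, i) s(u, j)) := by
  have at_swapped : ∀ e₀, e₀ = s(u, i) ∨ e₀ = s(u, j) → ∀ e ∈ G.edgeSet, e ≠ e₀ →
      (∃ v, v ∈ e ∧ v ∈ e₀) → c (swap s(u, i) s(u, j) e) ≠ c (swap s(u, i) s(u, j) e₀) := by
    rintro e₀ (rfl | rfl) e he hne hmeet
    · rw [swap_apply_left]
      exact hc.comp_swap_ne_of_meets hui huj h1j he hne hmeet
    · rw [swap_apply_right, swap_comm]
      exact hc.comp_swap_ne_of_meets huj hui h1i he hne hmeet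
  intro e₁ he₁ e₂ he₂ hne hmeet
  by_cases h₁ : e₁ = s(u, i) ∨ e₁ = s(u, j)
  · obtain ⟨v, hv₁, hv₂⟩ := hmeet
    exact (at_swapped e₁ h₁ e₂ he₂ hne.symm ⟨v, hv₂, hv₁⟩).symm
  by_cases h₂ : e₂ = s(u, i) ∨ e₂ = s(u, j)
  · exact at_swapped e₂ h₂ e₁ he₁ hne hmeet
  simp only [not_or] at h₁ h₂
  simp only [Function.comp_apply, swap_apply_of_ne_of_ne h₁.1 h₁.2,
    swap_apply_of_ne_of_ne h₂.1 h₂.2]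
  exact hc e₁ he₁ e₂ he₂ hne hmeet

lemma exists_mem_of_bichromatic_isCycle {c' : Sym2 V → ℕ} (hc' : ProperEdgeColoring G c')
    (hc'ui : c' s(u, i) = c s(u, j)) (hc'_eq : ∀ e, e ≠ s(u, i) → e ≠ s(u, j) → c' e = c e)
    {N' N'' : Set V} (hpart : G.neighborSet u \ {i, j} ⊆ N' ∪ N'')
    (h1j : ∀ w, G.Adj i w → w ≠ u → c s(i, w) ≠ c s(u, j))
    (hN' : ∀ z ∈ N', ∀ w, G.Adj i w → w ≠ u → c s(i, w) ≠ c s(u, z))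
    {v : V} {p : G.Walk v v} (hp : p.IsCycle) {α β : ℕ}
    (hcol : ∀ e ∈ p.edges, c' e = α ∨ c' e = β)
    (hi : s(u, i) ∈ p.edges) (hj : s(u, j) ∉ p.edges) :
    ∃ h ∈ N'', h ∈ p.support ∧ ∀ e ∈ p.edges, c' e = c' s(u, i) ∨ c' e = c' s(u, h) := by
  obtain ⟨z, hzi, huz⟩ := hp.exists_ne_mem_edges hi
  have hzj : z ≠ j := by rintro rfl; exact hj huz
  obtain ⟨w, hwu, hiw⟩ := hp.exists_ne_mem_edges (Sym2.eq_swap (a := u) ▸ hi)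
  have hGuz : G.Adj u z := p.edges_subset_edgeSet huz
  have hGiw : G.Adj i w := p.edges_subset_edgeSet hiw
  have hc'uz : c' s(u, z) = c s(u, z) :=
    hc'_eq _ (fun h => hzi (Sym2.congr_right.mp h)) (fun h => hzj (Sym2.congr_right.mp h))
  have hc'iw : c' s(i, w) = c s(i, w) := by
    refine hc'_eq _ (fun h => hwu ?_) (fun h => hj (h ▸ hiw))
    rwa [Sym2.eq_swap (a := u), Sym2.congr_right] at h
  have hne : c' s(u, i) ≠ c' s(u, z) :=
    hc' _ (p.edges_subset_edgeSet hi) _ hGuz (fun h => hzi (Sym2.congr_right.mp h).symm)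
      ⟨u, by simp, by simp⟩
  -- Two distinct colors among `α, β` at `u` pin down the color pair of the cycle.
  have htwo : ∀ e ∈ p.edges, c' e = c' s(u, i) ∨ c' e = c' s(u, z) := by
    intro e he
    have := hcol e he
    have := hcol _ hi
    have := hcol _ huz
    omega
  refine ⟨z, ?_, p.snd_mem_support_of_mem_edges huz, htwo⟩
  obtain hz | hz := hpart ⟨hGuz, by simp [hzi, hzj]⟩
  · rcases htwo _ hiw with h | h
    · exact absurd (hc'iw ▸ hc'ui ▸ h) (h1j w hGiw hwu)
    · exact absurd (hc'iw ▸ hc'uz ▸ h) (hN' z hz w hGiw hwu)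
  · exact hz

end ColorExchange

theorem color_exchange_not_valid_iff_general {V : Type*} [DecidableEq V]
    (G' : SimpleGraph V) (c : Sym2 V → ℕ)
    (hc : AcyclicProperEdgeColoring G' c)
    (u i j : V) (hui : G'.Adj u i) (huj : G'.Adj u j)
    (N' N'' : Set V)
    (hpart : N' ∪ N'' = G'.neighborSet u \ {i, j})
    (h1i : ∀ w : V, G'.Adj j w → w ≠ u → c s(j, w) ≠ c s(u, i))
    (h1j : ∀ w : V, G'.Adj i w → w ≠ u → c s(i, w) ≠ c s(u, j))
    (h2 : ∀ z ∈ N', (∀ w : V, G'.Adj i w → w ≠ u → c s(i, w) ≠ c s(u, z)) ∧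
                    (∀ w : V, G'.Adj j w → w ≠ u → c s(j, w) ≠ c s(u, z)))
    (c' : Sym2 V → ℕ)
    (hc' : c' = fun e =>
      if e = s(u, i) then c s(u, j) else if e = s(u, j) then c s(u, i) else c e) :
    ProperEdgeColoring G' c' ∧
    (¬ AcyclicProperEdgeColoring G' c' ↔
      ∃ h ∈ N'', ∃ (v : V) (q : G'.Walk v v), q.IsCycle ∧ h ∈ q.support ∧
        ∃ α : ℕ, (α = c' s(u, i) ∨ α = c' s(u, j)) ∧
          ∀ e ∈ q.edges, c' e = α ∨ c' e = c' s(u, h)) := by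
  have hswap : c' = c ∘ swap s(u, i) s(u, j) := by
    subst hc'
    funext e
    simp only [Function.comp_apply, swap_apply_def]
    split_ifs <;> rfl
  have hc'_eq (e) (h₁ : e ≠ s(u, i)) (h₂ : e ≠ s(u, j)) : c' e = c e := by
    simp [hswap, swap_apply_of_ne_of_ne h₁ h₂]
  have hP : ProperEdgeColoring G' c' := hswap ▸ hc.1.comp_swap hui huj h1i h1j
  refine ⟨hP, fun hnot => ?_, ?_⟩
  · simp only [AcyclicProperEdgeColoring, hP, true_and, not_forall, not_not] at hnot
    obtain ⟨v, p, hp, α, β, hcol⟩ := hnot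
    by_cases hij : s(u, i) ∈ p.edges ↔ s(u, j) ∈ p.edges
    · refine absurd ⟨α, β, ?_⟩ (hc.2 v p hp)
      exact List.forall_mem_of_forall_mem_swap (P := fun e => c e = α ∨ c e = β) hij
        (by simpa [hswap] using hcol)
    by_cases hi : s(u, i) ∈ p.edges
    · obtain ⟨h, hh, hsupp, htwo⟩ := exists_mem_of_bichromatic_isCycle hP (by simp [hswap])
        hc'_eq hpart.ge h1j (fun z hz => (h2 z hz).1) hp hcol hi (by tauto)
      exact ⟨h, hh, v, p, hp, hsupp, _, Or.inl rfl, htwo⟩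
    · obtain ⟨h, hh, hsupp, htwo⟩ := exists_mem_of_bichromatic_isCycle hP (by simp [hswap])
        (fun e h₁ h₂ => hc'_eq e h₂ h₁) (by rw [Set.pair_comm, hpart]) h1i
        (fun z hz => (h2 z hz).2) hp hcol (by tauto) hi
      exact ⟨h, hh, v, p, hp, hsupp, _, Or.inr rfl, htwo⟩
  · rintro ⟨h, -, v, q, hq, -, α, -, hall⟩ hA
    exact hA.2 v q hq ⟨α, _, hall⟩

/-- **Fact 3 (Configuration A).**  Let `i, j` be neighbors of `u` and let
`N' ∪ N''` partition `N(u) \ {i, j}`.  Assume (1) `c(u,i)` appears on no edge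
incident to `j` other than `uj` and `c(u,j)` appears on no edge incident to `i`
other than `ui`; and (2) for every `z ∈ N'`, the color `c(u,z)` appears on no edge
incident to `i` other than `ui` and on no edge incident to `j` other than `uj`.
Then the coloring `c'` obtained by exchanging the colors of `ui` and `uj` is proper,
and `c'` fails to be acyclic iff there is `h ∈ N''` and a bichromatic cycle through
`h` in the colors `α ∈ {c'(u,i), c'(u,j)}` and `β = c'(u,h)` with respect to `c'`. -/
theorem color_exchange_not_valid_iff {V : Type*} [DecidableEq V]
    (G' : SimpleGraph V) (c : Sym2 V → ℕ)
    (hc : AcyclicProperEdgeColoring G' c)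
    (u i j : V) (hui : G'.Adj u i) (huj : G'.Adj u j)
    (N' N'' : Set V)
    (hpart : N' ∪ N'' = G'.neighborSet u \ {i, j})
    (hNdisj : Disjoint N' N'')
    (h1i : ∀ w : V, G'.Adj j w → w ≠ u → c s(j, w) ≠ c s(u, i))
    (h1j : ∀ w : V, G'.Adj i w → w ≠ u → c s(i, w) ≠ c s(u, j))
    (h2 : ∀ z ∈ N', (∀ w : V, G'.Adj i w → w ≠ u → c s(i, w) ≠ c s(u, z)) ∧
                    (∀ w : V, G'.Adj j w → w ≠ u → c s(j, w) ≠ c s(u, z)))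
    (c' : Sym2 V → ℕ)
    (hc' : c' = fun e =>
      if e = s(u, i) then c s(u, j) else if e = s(u, j) then c s(u, i) else c e) :
    ProperEdgeColoring G' c' ∧
    (¬ AcyclicProperEdgeColoring G' c' ↔
      ∃ h ∈ N'', ∃ (v : V) (q : G'.Walk v v), q.IsCycle ∧ h ∈ q.support ∧
        ∃ α : ℕ, (α = c' s(u, i) ∨ α = c' s(u, j)) ∧
          ∀ e ∈ q.edges, c' e = α ∨ c' e = c' s(u, h)) :=
  color_exchange_not_valid_iff_general G' c hc u i j hui huj N' N'' hpart h1i h1j h2 c' hc'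
end
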